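/- (Combined flat equation.) Let n ≥ 2 and N ≥ 2n+1 be integers, α_2, …, α_n real coupling constants, and let a(t) be a positive twice-differentiable scale factor with Hubble function H = a'/a that satisfies both generalized flat Friedmann equations (P) and (D) with pressure p(t) and density ρ(t). Then for all t, H'(t)·((2-N) + Σ_{i=2}^{n} α_i·k12(i,N)·H(t)^{2i-2}) = p(t) + ρ(t). -/
import Mathlib


noncomputable def binom (m j : ℤ) : ℝ :=
  if 0 ≤ j ∧ j ≤ m then (m.toNat.choose j.toNat : ℝ) else 0


lemma binom_nat (a b : ℕ) (h : b ≤ a) : binom a b = a.choose b := by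
  simp [binom, h]

noncomputable def k11 (n N : ℤ) : ℝ :=
  -(1/2) * ((2*(n-1)).toNat.factorial : ℝ) * ((N : ℝ) - 2) * ((N : ℝ) - 1 - 2*(n : ℝ)) *
    binom (N - 3) (2*(n - 1))

noncomputable def k12 (n N : ℤ) : ℝ :=
  -(1/2) * ((2*(n-1)).toNat.factorial : ℝ) *
    (2*((N : ℝ) - (n : ℝ) - 1) * binom (N - 2) (2*(n - 1))
      + ((N : ℝ) - 2) * ((N : ℝ) - 1 - 2*(n : ℝ)) * binom (N - 3) (2*n - 3))

noncomputable def k21 (n N : ℤ) : ℝ :=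
  -(1/2) * ((2*(n-1)).toNat.factorial : ℝ) * ((N : ℝ) - 1) * ((N : ℝ) - 2) *
    binom (N - 3) (2*(n - 1))


lemma key_k_identity (i N : ℕ) (hi : 2 ≤ i) (hN : 2*i+1 ≤ N) :
    k11 i N + k12 i N = k21 i N := by
  unfold k11 k12 k21
  have e1 : ((N:ℤ) - 3) = ((N-3 : ℕ) : ℤ) := by omega
  have e2 : (2*((i:ℤ) - 1)) = ((2*i-2 : ℕ) : ℤ) := by omega
  have e3 : ((N:ℤ) - 2) = ((N-2 : ℕ) : ℤ) := by omega
  have e4 : (2*(i:ℤ) - 3) = ((2*i-3 : ℕ) : ℤ) := by omega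
  rw [e1, e2, e3, e4, binom_nat _ _ (by omega), binom_nat _ _ (by omega),
    binom_nat _ _ (by omega)]
  have ef : ((2*i-2 : ℕ) : ℤ).toNat = 2*i-2 := by omega
  rw [ef]
  have hPascal : (N-2).choose (2*i-2) = (N-3).choose (2*i-3) + (N-3).choose (2*i-2) := by
    have h1 : N - 2 = (N-3) + 1 := by omega
    have h2 : 2*i - 2 = (2*i-3) + 1 := by omega
    rw [h1, h2, Nat.choose_succ_succ]
  have hRatio : (N-3).choose (2*i-2) * (2*i-2) = (N-3).choose (2*i-3) * (N - 2*i) := by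
    have h2 : 2*i - 2 = (2*i-3) + 1 := by omega
    rw [h2, Nat.choose_succ_right_eq]
    congr 1
    omega
  have hP' : ((N-2).choose (2*i-2) : ℝ) = (N-3).choose (2*i-3) + (N-3).choose (2*i-2) := by
    exact_mod_cast congrArg (Nat.cast : ℕ → ℝ) hPascal
  have hR' : ((N-3).choose (2*i-2) : ℝ) * (2*(i:ℝ)-2)
      = ((N-3).choose (2*i-3) : ℝ) * ((N:ℝ) - 2*i) := by
    have := congrArg (Nat.cast : ℕ → ℝ) hRatio
    push_cast [Nat.sub_add_cancel] at this ⊢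
    rw [Nat.cast_sub (by omega), Nat.cast_sub (by omega)] at this
    push_cast at this
    linarith [this]
  set F : ℝ := ((2*i-2).factorial : ℝ) with hF
  linear_combination (-(F)*((N:ℝ) - i - 1)) * hP' + (F*((N:ℝ)-1)/2) * hR'

/-- The Hubble function H = a'/a of a scale factor. -/
noncomputable def Hub (a : ℝ → ℝ) : ℝ → ℝ := fun t => deriv a t / a t

/-- Combined flat equation: from the two generalized flat Friedmann equations one
    gets H'·((2−N) + Σ αᵢ k12 H^{2i−2}) = p + ρ. -/
theorem combined_flat_equation (n N : ℕ) (hn : 2 ≤ n) (hN : 2*n + 1 ≤ N)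
    (α : ℕ → ℝ) (a p ρ : ℝ → ℝ)
    (ha : ∀ t, 0 < a t)
    (hd1 : Differentiable ℝ a)
    (hd2 : Differentiable ℝ (deriv a))
    (hP : ∀ t, -((N : ℝ) - 2) * (((N : ℝ) - 1)/2 * (Hub a t)^2 + deriv (Hub a) t)
        + ∑ i ∈ Finset.Icc 2 n, α i *
            ((k11 i N + k12 i N) * (Hub a t)^(2*i)
              + k12 i N * deriv (Hub a) t * (Hub a t)^(2*i - 2)) = p t)
    (hD : ∀ t, -(1/2) * ((N : ℝ) - 1) * ((N : ℝ) - 2) * (Hub a t)^2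
        + ∑ i ∈ Finset.Icc 2 n, α i * k21 i N * (Hub a t)^(2*i) = -ρ t) :
    ∀ t : ℝ,
      deriv (Hub a) t * ((2 - (N : ℝ))
          + ∑ i ∈ Finset.Icc 2 n, α i * k12 i N * (Hub a t)^(2*i - 2))
        = p t + ρ t := by
  intro t
  have hp := hP t
  have hd := hD t
  have hS : ∑ i ∈ Finset.Icc 2 n, α i *
        ((k11 i N + k12 i N) * (Hub a t)^(2*i)
          + k12 i N * deriv (Hub a) t * (Hub a t)^(2*i - 2))
      = ∑ i ∈ Finset.Icc 2 n, (α i * k21 i N * (Hub a t)^(2*i)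
          + deriv (Hub a) t * (α i * k12 i N * (Hub a t)^(2*i - 2))) := by
    refine Finset.sum_congr rfl fun i hi => ?_
    simp only [Finset.mem_Icc] at hi
    rw [key_k_identity i N hi.1 (by omega)]
    ring
  rw [hS, Finset.sum_add_distrib, ← Finset.mul_sum] at hp
  rw [← hp]
  linarith [hd]
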